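/- Let m ≥ 1 be fixed. There exist constants c₄ > 0, β > 0, and δ' > 0 such that, for all n ≥ m sufficiently large, with probability at least 1 − e^{−c₄ n} the random n×m Toeplitz matrix H built from i.i.d. Rademacher inputs has the property: for every z ∈ ℝ^m with ‖z‖₂ = 1 and every subset K ⊆ {1,…,n} with |K| ≤ βn, Σ_{i∈K̄} |(Hz)_i| − Σ_{i∈K} |(Hz)_i| ≥ δ' n, where K̄ = {1,…,n} \ K. -/

import Mathlib

/-!
On the sign cube the Toeplitz Gram matrix `HᵀH` has diagonal `n`, and for `p < q` its entry
`∑ᵢ h_{i+p} h_{i+q}` splits, according to the parity of `⌊i / (q - p)⌋`, into two sums of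
products of disjoint pairs of signs. Such products are again independent signs, so a Chernoff
bound makes every off-diagonal entry at most `n / (2m)` outside an event of probability
`e^{-cn}`. Then `‖Hz‖₂² ≥ n / 2` for unit `z`, and `‖Hz‖₂² ≤ ‖Hz‖_∞ ‖Hz‖₁ ≤ m ‖Hz‖₁` gives
`‖Hz‖₁ ≥ n / (2m)`, while the coordinates in `K` contribute at most `|K| m ≤ n / (16m)`.
-/

open MeasureTheory ProbabilityTheory Finset Filter

noncomputable section

/-- The `n × m` Toeplitz matrix built from the input sequence
`h = (h_{-m+2}, …, h_n)`, reindexed as `h : Fin (n+m-1) → ℝ`;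
the `(i,j)` entry (0-based) is the input with index `i + j`, which corresponds to
`H_{i,j} = h_{i-m+j}` in 1-based indexing. -/
def toeplitz (n m : ℕ) (h : Fin (n + m - 1) → ℝ) : Matrix (Fin n) (Fin m) ℝ :=
  fun i j => h ⟨i.1 + j.1, by have := i.2; have := j.2; omega⟩

/-- The ℓ¹ norm of a vector in `ℝ^k`. -/
def l1 {k : ℕ} (v : Fin k → ℝ) : ℝ := ∑ i, |v i|

/-- The Euclidean (ℓ²) norm of a vector in `ℝ^k`. -/
def l2 {k : ℕ} (v : Fin k → ℝ) : ℝ := Real.sqrt (∑ i, (v i) ^ 2)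

/-- The Rademacher measure on ℝ: values `+1` and `-1` with probability `1/2` each. -/
def radMeasure : Measure ℝ :=
  (2 : ENNReal)⁻¹ • Measure.dirac 1 + (2 : ENNReal)⁻¹ • Measure.dirac (-1)

/-- Product of `d` i.i.d. Rademacher measures on `ℝ^d`. -/
def radPi (d : ℕ) : Measure (Fin d → ℝ) := Measure.pi fun _ => radMeasure

open Classical in
/-- Number of nonzero entries of a vector. -/
def sparsity {k : ℕ} (v : Fin k → ℝ) : ℕ := (Finset.univ.filter fun i => v i ≠ 0).card

instance : IsProbabilityMeasure radMeasure := by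
  constructor
  simp [radMeasure, ENNReal.inv_two_add_inv_two]

instance (d : ℕ) : IsProbabilityMeasure (radPi d) := by
  unfold radPi; infer_instance

def cube (d : ℕ) : Finset (Fin d → ℝ) := Fintype.piFinset fun _ => {1, -1}

lemma mem_cube {d : ℕ} {s : Fin d → ℝ} : s ∈ cube d ↔ ∀ i, s i ^ 2 = 1 := by
  simp [cube, sq_eq_one_iff]

lemma radPi_cube_compl (d : ℕ) : radPi d (cube d : Set (Fin d → ℝ))ᶜ = 0 := by
  have hpair : radMeasure {1, -1} = 1 := by
    simp [radMeasure, ENNReal.inv_two_add_inv_two]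
  rw [prob_compl_eq_one_sub (cube d).measurableSet, cube, Fintype.coe_piFinset, radPi,
    Measure.pi_pi]
  simp [hpair]

lemma radPi_singleton {d : ℕ} {s : Fin d → ℝ} (hs : s ∈ cube d) :
    radPi d {s} = ((2 : ENNReal) ^ d)⁻¹ := by
  have hpoint : ∀ x : ℝ, x = 1 ∨ x = -1 → radMeasure {x} = 2⁻¹ := by
    rintro x (rfl | rfl) <;> norm_num [radMeasure]
  rw [← Set.univ_pi_singleton s, radPi, Measure.pi_pi, ENNReal.inv_pow,
    Finset.prod_congr rfl fun i _ => hpoint _ (sq_eq_one_iff.1 (mem_cube.1 hs i))]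
  simp

lemma radPi_le_card_filter {d : ℕ} (S : Set (Fin d → ℝ)) [DecidablePred (· ∈ S)] :
    radPi d S ≤ ENNReal.ofReal (#{s ∈ cube d | s ∈ S} / 2 ^ d) := by
  have hsub : S ⊆ (⋃ s ∈ {s ∈ cube d | s ∈ S}, {s}) ∪ (cube d : Set (Fin d → ℝ))ᶜ := by
    intro h hS
    by_cases hh : h ∈ cube d
    · exact Or.inl (Set.mem_biUnion (Finset.mem_filter.2 ⟨hh, hS⟩) rfl)
    · exact Or.inr hh
  calc radPi d S
      ≤ radPi d (⋃ s ∈ {s ∈ cube d | s ∈ S}, {s}) + radPi d (cube d : Set (Fin d → ℝ))ᶜ :=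
        (measure_mono hsub).trans (measure_union_le _ _)
    _ ≤ ∑ s ∈ {s ∈ cube d | s ∈ S}, radPi d {s} := by
        rw [radPi_cube_compl, add_zero]; exact measure_biUnion_finset_le _ _
    _ = ENNReal.ofReal (#{s ∈ cube d | s ∈ S} / 2 ^ d) := by
        rw [Finset.sum_congr rfl fun s hs => radPi_singleton (Finset.mem_filter.1 hs).1,
          Finset.sum_const, nsmul_eq_mul, ENNReal.ofReal_div_of_pos (by positivity),
          ENNReal.ofReal_natCast, ENNReal.ofReal_pow zero_le_two, ENNReal.ofReal_ofNat,
          div_eq_mul_inv]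

section Chernoff

variable {d : ℕ} {ι : Type*} [Fintype ι]

lemma sum_cube_prod (g : Fin d → ℝ → ℝ) :
    ∑ s ∈ cube d, ∏ i, g i (s i) = ∏ i, (g i 1 + g i (-1)) := by
  rw [cube, ← Finset.prod_univ_sum]
  exact Finset.prod_congr rfl fun i _ => Finset.sum_pair (by norm_num)

lemma sum_cube_exp_sum {b : ι → Fin d} (hb : Function.Injective b) (t : ℝ) :
    ∑ s ∈ cube d, Real.exp (t * ∑ l, s (b l)) = 2 ^ d * Real.cosh t ^ Fintype.card ι := by
  classical
  have hprod : ∀ s : Fin d → ℝ, Real.exp (t * ∑ l, s (b l)) =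
      ∏ i, if i ∈ univ.image b then Real.exp (t * s i) else 1 := by
    intro s
    rw [Finset.prod_ite_mem, univ_inter, prod_image fun l _ l' _ h => hb h, mul_sum,
      Real.exp_sum]
  have hfactor : ∀ i : Fin d, ((if i ∈ univ.image b then Real.exp (t * 1) else 1) +
      if i ∈ univ.image b then Real.exp (t * -1) else 1) =
      2 * if i ∈ univ.image b then Real.cosh t else 1 := by
    intro i
    split_ifs
    · rw [Real.cosh_eq, mul_one, mul_neg_one]; ring
    · norm_num
  rw [sum_congr rfl fun s _ => hprod s,
    sum_cube_prod fun i x => if i ∈ univ.image b then Real.exp (t * x) else 1,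
    prod_congr rfl fun i _ => hfactor i,
    prod_mul_distrib, prod_const, card_univ, Fintype.card_fin, prod_ite_mem, univ_inter,
    prod_const, card_image_of_injective _ hb, card_univ]

/-- Flipping `s (b l)` to `s (a l) * s (b l)` is an involution of the cube, so the products
`s (a l) * s (b l)` are jointly distributed like the independent signs `s (b l)`. -/
lemma sum_cube_mul_eq {a b : ι → Fin d} (hb : Function.Injective b) (hab : ∀ l l', a l ≠ b l')
    (F : (ι → ℝ) → ℝ) :
    ∑ s ∈ cube d, F (fun l => s (a l) * s (b l)) = ∑ s ∈ cube d, F (fun l => s (b l)) := by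
  classical
  set Φ : (Fin d → ℝ) → Fin d → ℝ := fun s x => (∏ l with b l = x, s (a l)) * s x with hΦ
  have hΦa : ∀ s l, Φ s (a l) = s (a l) := by
    intro s l
    simp [hΦ, fun l' => (hab l l').symm]
  have hΦb : ∀ s l, Φ s (b l) = s (a l) * s (b l) := by
    intro s l
    simp [hΦ, hb.eq_iff, prod_filter]
  have hmem : ∀ s ∈ cube d, Φ s ∈ cube d := by
    simp only [mem_cube]
    intro s hs x
    rw [hΦ, mul_pow, ← prod_pow, prod_congr rfl fun l _ => hs (a l), prod_const_one, hs, one_mul]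
  have hinv : ∀ s ∈ cube d, Φ (Φ s) = s := by
    intro s hs
    funext x
    have hs := mem_cube.1 hs
    change (∏ l with b l = x, Φ s (a l)) * ((∏ l with b l = x, s (a l)) * s x) = s x
    rw [prod_congr rfl fun l _ => hΦa s l, ← mul_assoc, ← sq, ← prod_pow,
      prod_congr rfl fun l _ => hs (a l), prod_const_one, one_mul]
  exact sum_nbij' Φ Φ hmem hmem hinv hinv fun s _ => congrArg F (funext fun l => (hΦb s l).symm)

lemma card_le_abs_sum_mul_mul_exp_le {a b : ι → Fin d} (hb : Function.Injective b)
    (hab : ∀ l l', a l ≠ b l') {u t : ℝ} (ht : 0 ≤ t) :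
    #{s ∈ cube d | u ≤ |∑ l, s (a l) * s (b l)|} * Real.exp (t * u) ≤
      2 * 2 ^ d * Real.cosh t ^ Fintype.card ι := by
  have hexp : ∀ t : ℝ, ∑ s ∈ cube d, Real.exp (t * ∑ l, s (a l) * s (b l)) =
      2 ^ d * Real.cosh t ^ Fintype.card ι := fun t =>
    (sum_cube_mul_eq hb hab fun x => Real.exp (t * ∑ l, x l)).trans (sum_cube_exp_sum hb t)
  have hmarkov : ∀ s ∈ {s ∈ cube d | u ≤ |∑ l, s (a l) * s (b l)|}, Real.exp (t * u) ≤
      Real.exp (t * ∑ l, s (a l) * s (b l)) + Real.exp (-t * ∑ l, s (a l) * s (b l)) := by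
    intro s hs
    rcases le_abs.1 (mem_filter.1 hs).2 with hu | hu
    · have := Real.exp_pos (-t * ∑ l, s (a l) * s (b l))
      have := Real.exp_le_exp.2 (mul_le_mul_of_nonneg_left hu ht)
      linarith
    · have := Real.exp_pos (t * ∑ l, s (a l) * s (b l))
      have := Real.exp_le_exp.2 (mul_le_mul_of_nonneg_left hu ht)
      rw [mul_neg, ← neg_mul] at this
      linarith
  calc #{s ∈ cube d | u ≤ |∑ l, s (a l) * s (b l)|} * Real.exp (t * u)
      ≤ ∑ s ∈ cube d, (Real.exp (t * ∑ l, s (a l) * s (b l)) +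
          Real.exp (-t * ∑ l, s (a l) * s (b l))) := by
        rw [← nsmul_eq_mul]
        exact (card_nsmul_le_sum _ _ _ hmarkov).trans
          (sum_le_sum_of_subset_of_nonneg (filter_subset _ _) fun _ _ _ => by positivity)
    _ = 2 * 2 ^ d * Real.cosh t ^ Fintype.card ι := by
        rw [sum_add_distrib, hexp, hexp, Real.cosh_neg]; ring

lemma card_le_abs_sum_mul_le {a b : ι → Fin d} (hb : Function.Injective b)
    (hab : ∀ l l', a l ≠ b l') {N u : ℝ} (hN : Fintype.card ι ≤ N) (hN0 : 0 < N) (hu : 0 ≤ u) :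
    (#{s ∈ cube d | u ≤ |∑ l, s (a l) * s (b l)|} : ℝ) ≤
      2 * 2 ^ d * Real.exp (-(u ^ 2 / (2 * N))) := by
  set t := u / N with ht
  have hcosh : Real.cosh t ^ Fintype.card ι ≤ Real.exp (N * (t ^ 2 / 2)) :=
    calc Real.cosh t ^ Fintype.card ι ≤ Real.exp (t ^ 2 / 2) ^ Fintype.card ι :=
          pow_le_pow_left₀ (Real.cosh_pos _).le (Real.cosh_le_exp_half_sq t) _
      _ = Real.exp (Fintype.card ι * (t ^ 2 / 2)) := (Real.exp_nat_mul _ _).symm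
      _ ≤ Real.exp (N * (t ^ 2 / 2)) := by gcongr
  have key := card_le_abs_sum_mul_mul_exp_le hb hab (u := u) (div_nonneg hu hN0.le)
  rw [← le_div_iff₀ (Real.exp_pos _)] at key
  calc _ ≤ 2 * 2 ^ d * Real.cosh t ^ Fintype.card ι / Real.exp (t * u) := key
    _ ≤ 2 * 2 ^ d * Real.exp (N * (t ^ 2 / 2)) / Real.exp (t * u) := by gcongr
    _ = 2 * 2 ^ d * Real.exp (-(u ^ 2 / (2 * N))) := by
        rw [mul_div_assoc, ← Real.exp_sub]
        congr 2
        rw [ht]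
        field_simp
        ring

end Chernoff

section GramBound

open Matrix

variable {ι κ : Type*} [Fintype κ]

lemma sum_sq_mulVec_eq [Fintype ι] (A : Matrix ι κ ℝ) (z : κ → ℝ) :
    ∑ i, (A *ᵥ z) i ^ 2 = z ⬝ᵥ ((Aᵀ * A) *ᵥ z) := by
  rw [← mulVec_mulVec, dotProduct_mulVec, vecMul_transpose]
  simp [dotProduct, sq]

def GramNear [Fintype ι] [DecidableEq κ] (A : Matrix ι κ ℝ) (c δ : ℝ) : Prop :=
  ∀ p q, |(Aᵀ * A - c • (1 : Matrix κ κ ℝ)) p q| ≤ δ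

lemma sub_le_sum_sq_mulVec [Fintype ι] [DecidableEq κ] {A : Matrix ι κ ℝ} {c δ : ℝ}
    (hA : GramNear A c δ) (z : κ → ℝ) :
    c * ∑ j, z j ^ 2 - δ * (∑ j, |z j|) ^ 2 ≤ ∑ i, (A *ᵥ z) i ^ 2 := by
  set E := Aᵀ * A - c • 1
  have hE : |z ⬝ᵥ (E *ᵥ z)| ≤ δ * (∑ j, |z j|) ^ 2 :=
    calc |z ⬝ᵥ (E *ᵥ z)| = |∑ p, ∑ q, z p * E p q * z q| := by
          simp only [dotProduct, mulVec, mul_sum, mul_assoc]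
      _ ≤ ∑ p, ∑ q, |z p| * δ * |z q| := by
          refine (abs_sum_le_sum_abs _ _).trans (sum_le_sum fun p _ => ?_)
          refine (abs_sum_le_sum_abs _ _).trans (sum_le_sum fun q _ => ?_)
          rw [abs_mul, abs_mul]
          gcongr
          exact hA p q
      _ = δ * (∑ j, |z j|) ^ 2 := by
          rw [sq, sum_mul_sum, mul_sum]
          exact sum_congr rfl fun p _ => by rw [mul_sum]; exact sum_congr rfl fun q _ => by ring
  have hzz : z ⬝ᵥ z = ∑ j, z j ^ 2 := by simp [dotProduct, sq]
  rw [sum_sq_mulVec_eq, show Aᵀ * A = c • 1 + E by simp [E], add_mulVec,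
    dotProduct_add, smul_mulVec, one_mulVec, dotProduct_smul, smul_eq_mul, hzz]
  linarith [neg_abs_le (z ⬝ᵥ (E *ᵥ z))]

lemma abs_mulVec_le_sum_abs {A : Matrix ι κ ℝ} (hA : ∀ i j, |A i j| ≤ 1) (z : κ → ℝ) (i : ι) :
    |(A *ᵥ z) i| ≤ ∑ j, |z j| :=
  (abs_sum_le_sum_abs _ _).trans <| sum_le_sum fun j _ => by
    rw [abs_mul]; exact mul_le_of_le_one_left (abs_nonneg _) (hA i j)

lemma le_sum_compl_sub_sum_abs_mulVec [Fintype ι] [DecidableEq ι] [DecidableEq κ]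
    {A : Matrix ι κ ℝ} (hA1 : ∀ i j, |A i j| ≤ 1) {c : ℝ} (hc : 0 ≤ c)
    (hA : GramNear A c (1 / (2 * Fintype.card κ) * c))
    {z : κ → ℝ} (hz : ∑ j, z j ^ 2 = 1) {K : Finset ι}
    (hK : (#K : ℝ) ≤ 1 / (16 * (Fintype.card κ : ℝ) ^ 2) * c) :
    1 / (4 * (Fintype.card κ : ℝ)) * c ≤ ∑ i ∈ Kᶜ, |(A *ᵥ z) i| - ∑ i ∈ K, |(A *ᵥ z) i| := by
  set m : ℝ := (Fintype.card κ : ℝ)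
  set M := ∑ j, |z j|
  set T := ∑ i, |(A *ᵥ z) i|
  set S := ∑ i ∈ K, |(A *ᵥ z) i|
  have hm : 1 ≤ m := by
    have : Nonempty κ := by
      by_contra h
      rw [not_nonempty_iff] at h
      simp at hz
    exact Nat.one_le_cast.2 Fintype.card_pos
  have hM0 : 0 ≤ M := sum_nonneg fun j _ => abs_nonneg _
  have hM2 : M ^ 2 ≤ m := by
    simpa [sq_abs, hz] using sq_sum_le_card_mul_sum_sq (s := univ) (f := fun j => |z j|)
  have hMm : M ≤ m := by nlinarith
  have hQ : c / 2 ≤ ∑ i, (A *ᵥ z) i ^ 2 := by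
    have h := sub_le_sum_sq_mulVec hA z
    rw [hz, mul_one] at h
    have : 1 / (2 * m) * c * M ^ 2 ≤ 1 / (2 * m) * c * m := by gcongr
    have : 1 / (2 * m) * c * m = c / 2 := by field_simp
    linarith
  have hQT : ∑ i, (A *ᵥ z) i ^ 2 ≤ M * T := by
    rw [mul_sum]
    refine sum_le_sum fun i _ => ?_
    rw [← sq_abs, sq]
    exact mul_le_mul_of_nonneg_right (abs_mulVec_le_sum_abs hA1 z i) (abs_nonneg _)
  have hT : c / m / 2 ≤ T := by
    rw [div_div, div_le_iff₀ (by positivity)]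
    nlinarith [sum_nonneg fun i (_ : i ∈ univ) => abs_nonneg ((A *ᵥ z) i)]
  have hS : S ≤ c / m / 16 := by
    calc S ≤ #K * M := by
          simpa using sum_le_sum fun i (_ : i ∈ K) => abs_mulVec_le_sum_abs hA1 z i
      _ ≤ 1 / (16 * m ^ 2) * c * m := by gcongr
      _ = c / m / 16 := by field_simp
  have hsplit : ∑ i ∈ Kᶜ, |(A *ᵥ z) i| = T - S := by
    rw [eq_sub_iff_add_eq]; exact sum_compl_add_sum K _
  rw [hsplit, show 1 / (4 * m) * c = c / m / 4 by ring]
  linarith [div_nonneg hc (by positivity : (0 : ℝ) ≤ m)]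

end GramBound

section Toeplitz

open Matrix

variable {n m : ℕ}

lemma abs_toeplitz_le_one {h : Fin (n + m - 1) → ℝ} (hh : h ∈ cube _) (i : Fin n) (j : Fin m) :
    |toeplitz n m h i j| ≤ 1 :=
  (sq_le_one_iff_abs_le_one _).1 (mem_cube.1 hh _).le

lemma toeplitz_gram_self {h : Fin (n + m - 1) → ℝ} (hh : h ∈ cube _) (p : Fin m) :
    ((toeplitz n m h)ᵀ * toeplitz n m h) p p = n := by
  simp [mul_apply, toeplitz, ← sq, mem_cube.1 hh]

/-- The condition on `P` rules out `i + p = i' + q` for rows `i, i'` satisfying `P`, so the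
summands are products of disjoint pairs of signs. -/
lemma card_cube_le_abs_sum_mul_shift_le {p q : Fin m} (hpq : p ≤ q) (hn : 0 < n) (P : ℕ → Prop)
    [DecidablePred P] (hP : ∀ j, P (j + (q - p : ℕ)) → ¬ P j) {u : ℝ} (hu : 0 ≤ u) :
    (#{s ∈ cube (n + m - 1) |
        u ≤ |∑ l : {i : Fin n // P i}, s ⟨l.1 + p, by omega⟩ * s ⟨l.1 + q, by omega⟩|} : ℝ) ≤
      2 * 2 ^ (n + m - 1) * Real.exp (-(u ^ 2 / (2 * n))) := by
  have hb : Function.Injective fun l : {i : Fin n // P i} =>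
      (⟨l.1 + q, by omega⟩ : Fin (n + m - 1)) := by
    intro l l' h
    have := congrArg Fin.val h
    exact Subtype.ext (Fin.ext (by simp at this; omega))
  have hab : ∀ l l' : {i : Fin n // P i},
      (⟨l.1 + p, by omega⟩ : Fin (n + m - 1)) ≠ ⟨l'.1 + q, by omega⟩ := by
    intro l l' h
    have hl : l.1.1 = l'.1.1 + (q - p : ℕ) := by have := congrArg Fin.val h; simp at this; omega
    exact hP _ (hl ▸ l.2) l'.2
  have hcard : (Fintype.card {i : Fin n // P i} : ℝ) ≤ n := by
    exact_mod_cast (Fintype.card_subtype_le _).trans (Fintype.card_fin n).le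
  exact card_le_abs_sum_mul_le hb hab hcard (by exact_mod_cast hn) hu

lemma card_cube_le_abs_toeplitz_gram_le {p q : Fin m} (hpq : p < q) (hn : 0 < n) {u : ℝ}
    (hu : 0 ≤ u) :
    (#{s ∈ cube (n + m - 1) | u ≤ |((toeplitz n m s)ᵀ * toeplitz n m s) p q|} : ℝ) ≤
      4 * 2 ^ (n + m - 1) * Real.exp (-(u ^ 2 / (8 * n))) := by
  set P : ℕ → Prop := fun j => j / (q - p : ℕ) % 2 = 0
  have hk : 0 < (q - p : ℕ) := by omega
  have hP : ∀ j, P (j + (q - p : ℕ)) → ¬ P j := by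
    intro j; simp only [P, Nat.add_div_right _ hk]; omega
  have hnP : ∀ j, ¬ P (j + (q - p : ℕ)) → ¬ ¬ P j := by
    intro j; simp only [P, Nat.add_div_right _ hk]; omega
  set X : (Fin (n + m - 1) → ℝ) → ℝ :=
    fun s => ∑ l : {i : Fin n // P i}, s ⟨l.1 + p, by omega⟩ * s ⟨l.1 + q, by omega⟩
  set Y : (Fin (n + m - 1) → ℝ) → ℝ :=
    fun s => ∑ l : {i : Fin n // ¬ P i}, s ⟨l.1 + p, by omega⟩ * s ⟨l.1 + q, by omega⟩
  have hsub : {s ∈ cube (n + m - 1) | u ≤ |((toeplitz n m s)ᵀ * toeplitz n m s) p q|} ⊆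
      {s ∈ cube (n + m - 1) | u / 2 ≤ |X s|} ∪ {s ∈ cube (n + m - 1) | u / 2 ≤ |Y s|} := by
    intro s hs
    have hsplit : ((toeplitz n m s)ᵀ * toeplitz n m s) p q = X s + Y s :=
      (Fintype.sum_subtype_add_sum_subtype (fun i : Fin n => P i) _).symm
    rw [mem_filter, hsplit] at hs
    rw [mem_union, mem_filter, mem_filter]
    by_contra! h
    linarith [abs_add_le (X s) (Y s), h.1 hs.1, h.2 hs.1, hs.2]
  have hexp : (u / 2) ^ 2 / (2 * n) = u ^ 2 / (8 * n) := by ring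
  calc (#{s ∈ cube (n + m - 1) | u ≤ |((toeplitz n m s)ᵀ * toeplitz n m s) p q|} : ℝ)
      ≤ #({s ∈ cube (n + m - 1) | u / 2 ≤ |X s|} ∪ {s ∈ cube (n + m - 1) | u / 2 ≤ |Y s|}) := by
        exact_mod_cast card_le_card hsub
    _ ≤ #{s ∈ cube (n + m - 1) | u / 2 ≤ |X s|} + #{s ∈ cube (n + m - 1) | u / 2 ≤ |Y s|} := by
        exact_mod_cast card_union_le _ _
    _ ≤ 4 * 2 ^ (n + m - 1) * Real.exp (-(u ^ 2 / (8 * n))) := by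
        have hX := card_cube_le_abs_sum_mul_shift_le hpq.le hn P hP (by positivity : 0 ≤ u / 2)
        have hY := card_cube_le_abs_sum_mul_shift_le hpq.le hn (fun j => ¬ P j) hnP
          (by positivity : 0 ≤ u / 2)
        rw [hexp] at hX hY
        linarith

lemma gramNear_toeplitz_of_forall_lt {s : Fin (n + m - 1) → ℝ} (hs : s ∈ cube _) {δ : ℝ}
    (hδ : 0 ≤ δ) (h : ∀ p q : Fin m, p < q → |((toeplitz n m s)ᵀ * toeplitz n m s) p q| ≤ δ) :
    GramNear (toeplitz n m s) n δ := by
  intro p q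
  rcases lt_trichotomy p q with hpq | rfl | hqp
  · simpa [one_apply_ne hpq.ne] using h p q hpq
  · simpa [toeplitz_gram_self hs] using hδ
  · have hsymm : ((toeplitz n m s)ᵀ * toeplitz n m s) p q =
        ((toeplitz n m s)ᵀ * toeplitz n m s) q p := by
      simp only [mul_apply, transpose_apply, mul_comm]
    simpa [one_apply_ne hqp.ne', hsymm] using h q p hqp

open Classical in
lemma card_cube_not_gramNear_toeplitz_le (hn : 0 < n) {ε : ℝ} (hε : 0 ≤ ε) :
    (#{s ∈ cube (n + m - 1) | ¬ GramNear (toeplitz n m s) n (ε * n)} : ℝ) ≤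
      m ^ 2 * (4 * 2 ^ (n + m - 1) * Real.exp (-(ε ^ 2 * n / 8))) := by
  set pairs : Finset (Fin m × Fin m) := {pq ∈ univ | pq.1 < pq.2}
  have hsub : {s ∈ cube (n + m - 1) | ¬ GramNear (toeplitz n m s) n (ε * n)} ⊆
      pairs.biUnion fun pq => {s ∈ cube (n + m - 1) |
        ε * n ≤ |((toeplitz n m s)ᵀ * toeplitz n m s) pq.1 pq.2|} := by
    intro s hs
    obtain ⟨hs, hnear⟩ := mem_filter.1 hs
    by_contra hnot
    refine hnear (gramNear_toeplitz_of_forall_lt hs (by positivity) fun p q hpq => ?_)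
    by_contra! hpq'
    exact hnot (mem_biUnion.2 ⟨(p, q), mem_filter.2 ⟨mem_univ _, hpq⟩,
      mem_filter.2 ⟨hs, hpq'.le⟩⟩)
  have hpair : ∀ pq ∈ pairs,
      (#{s ∈ cube (n + m - 1) | ε * n ≤ |((toeplitz n m s)ᵀ * toeplitz n m s) pq.1 pq.2|} : ℝ) ≤
        4 * 2 ^ (n + m - 1) * Real.exp (-(ε ^ 2 * n / 8)) := by
    intro pq hpq
    have h := card_cube_le_abs_toeplitz_gram_le (mem_filter.1 hpq).2 hn
      (mul_nonneg hε n.cast_nonneg)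
    rwa [show (ε * n) ^ 2 / (8 * n) = ε ^ 2 * n / 8 by field_simp] at h
  have hpairs : (#pairs : ℝ) ≤ m ^ 2 := by
    exact_mod_cast (card_filter_le _ _).trans (by simp [sq])
  calc _ ≤ ∑ pq ∈ pairs, (#{s ∈ cube (n + m - 1) |
        ε * n ≤ |((toeplitz n m s)ᵀ * toeplitz n m s) pq.1 pq.2|} : ℝ) := by
        exact_mod_cast (card_le_card hsub).trans card_biUnion_le
    _ ≤ #pairs * (4 * 2 ^ (n + m - 1) * Real.exp (-(ε ^ 2 * n / 8))) := by
        simpa using sum_le_card_nsmul _ _ _ hpair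
    _ ≤ m ^ 2 * (4 * 2 ^ (n + m - 1) * Real.exp (-(ε ^ 2 * n / 8))) := by gcongr

lemma radPi_compl_le_of_gramNear_toeplitz (hn : 0 < n) {ε : ℝ} (hε : 0 ≤ ε)
    {S : Set (Fin (n + m - 1) → ℝ)}
    (hS : ∀ s ∈ cube (n + m - 1), GramNear (toeplitz n m s) n (ε * n) → s ∈ S) :
    radPi (n + m - 1) Sᶜ ≤ ENNReal.ofReal (4 * m ^ 2 * Real.exp (-(ε ^ 2 * n / 8))) := by
  classical
  refine (radPi_le_card_filter Sᶜ).trans (ENNReal.ofReal_le_ofReal ?_)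
  rw [div_le_iff₀ (by positivity)]
  calc (#{s ∈ cube (n + m - 1) | s ∈ Sᶜ} : ℝ)
      ≤ #{s ∈ cube (n + m - 1) | ¬ GramNear (toeplitz n m s) n (ε * n)} :=
        Nat.cast_le.2 (card_le_card (monotone_filter_right _ fun s hs hSc hnear =>
          hSc (hS s hs hnear)))
    _ ≤ m ^ 2 * (4 * 2 ^ (n + m - 1) * Real.exp (-(ε ^ 2 * n / 8))) :=
        card_cube_not_gramNear_toeplitz_le hn hε
    _ = 4 * m ^ 2 * Real.exp (-(ε ^ 2 * n / 8)) * 2 ^ (n + m - 1) := by ring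

end Toeplitz

lemma ofReal_one_sub_le_of_measure_compl_le {α : Type*} [MeasurableSpace α] {μ : Measure α}
    [IsProbabilityMeasure μ] {S : Set α} {x : ℝ} (hx : 0 ≤ x) (h : μ Sᶜ ≤ ENNReal.ofReal x) :
    ENNReal.ofReal (1 - x) ≤ μ S := by
  rw [ENNReal.ofReal_sub _ hx, ENNReal.ofReal_one, tsub_le_iff_right, ← measure_univ (μ := μ)]
  exact (measure_univ_le_add_compl S).trans (by gcongr)

lemma eventually_mul_exp_neg_le (C : ℝ) {a : ℝ} (ha : 0 < a) :
    ∀ᶠ n : ℕ in atTop, C * Real.exp (-(2 * a * n)) ≤ Real.exp (-a * n) := by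
  have hgrow : ∀ᶠ n : ℕ in atTop, C ≤ Real.exp (a * n) :=
    (Real.tendsto_exp_atTop.comp
      (tendsto_natCast_atTop_atTop.const_mul_atTop ha)).eventually_ge_atTop C
  filter_upwards [hgrow] with n hn
  calc C * Real.exp (-(2 * a * n)) ≤ Real.exp (a * n) * Real.exp (-(2 * a * n)) := by gcongr
    _ = Real.exp (-a * n) := by rw [← Real.exp_add]; ring_nf

/-- For fixed `m ≥ 1` there exist constants `c₄, β, δ' > 0` such that,
with probability at least `1 - e^{-c₄ n}` for large `n ≥ m`, the Rademacher Toeplitz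
matrix satisfies: for every unit vector `z` and every subset `K` with `|K| ≤ βn`,
`∑_{i∈K̄}|(Hz)_i| - ∑_{i∈K}|(Hz)_i| ≥ δ'·n`. -/
theorem stmt12 (m : ℕ) (hm : 1 ≤ m) :
    ∃ c₄ : ℝ, 0 < c₄ ∧ ∃ β : ℝ, 0 < β ∧ ∃ δ' : ℝ, 0 < δ' ∧
      ∃ N : ℕ, ∀ n : ℕ, N ≤ n → m ≤ n →
        ENNReal.ofReal (1 - Real.exp (-c₄ * n)) ≤
          radPi (n + m - 1)
            {h | ∀ z : Fin m → ℝ, l2 z = 1 →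
              ∀ K : Finset (Fin n), (K.card : ℝ) ≤ β * n →
                δ' * (n : ℝ) ≤
                  ∑ i ∈ Kᶜ, |(toeplitz n m h).mulVec z i| -
                    ∑ i ∈ K, |(toeplitz n m h).mulVec z i|} := by
  have hm0 : (0 : ℝ) < m := by exact_mod_cast hm
  set ε : ℝ := 1 / (2 * m)
  obtain ⟨N, hN⟩ := eventually_atTop.1
    (eventually_mul_exp_neg_le (4 * m ^ 2) (by positivity : 0 < ε ^ 2 / 16))
  refine ⟨ε ^ 2 / 16, by positivity, 1 / (16 * (m : ℝ) ^ 2), by positivity, 1 / (4 * m),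
    by positivity, N, fun n hNn hmn => ofReal_one_sub_le_of_measure_compl_le (Real.exp_pos _).le
      ((radPi_compl_le_of_gramNear_toeplitz (by omega) (by positivity : 0 ≤ ε)
        fun s hs hnear z hz K hK => ?_).trans (ENNReal.ofReal_le_ofReal ?_))⟩
  · simpa using le_sum_compl_sub_sum_abs_mulVec (abs_toeplitz_le_one hs) n.cast_nonneg
      (by simpa [ε] using hnear) (Real.sqrt_eq_one.1 hz) (K := K) (by simpa using hK)
  · calc 4 * m ^ 2 * Real.exp (-(ε ^ 2 * n / 8))
        = 4 * m ^ 2 * Real.exp (-(2 * (ε ^ 2 / 16) * n)) := by ring_nf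
      _ ≤ Real.exp (-(ε ^ 2 / 16) * n) := hN n hNn
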